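/- Let Y ⊂ ℝ² be a set of Hausdorff dimension 0, viewed as a code set of non-vertical lines, i.e., each (a,b) ∈ Y codes the line {(t, a·t + b) : t ∈ ℝ}. Then the union of these lines, ⋃_{(a,b) ∈ Y} {(t, a·t + b) : t ∈ ℝ}, has Hausdorff dimension at most 1. -/

import Mathlib

open Set MeasureTheory

/-- The non-vertical line in `ℝ²` with slope `a` and intercept `b`. -/
def lineAB (a b : ℝ) : Set (ℝ × ℝ) := {q : ℝ × ℝ | q.2 = a * q.1 + b}

/-!
The union of the lines is the image of `Y × ℝ` under the smooth map `((a, b), t) ↦ (t, a t + b)`,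
and `C¹` maps do not increase Hausdorff dimension, so it suffices that
`dimH (A × ℝ) ≤ dimH A + 1`. If `μH[s] A = 0`, cover `A` at scale `r` by sets `tₙ` with
`∑ diam tₙ ^ s < 1` and cut each `tₙ × [a, b]` into about `(b - a) / δₙ` boxes of diameter
`δₙ ≥ diam tₙ`. Their `(s + 1)`-sum is at most `(b - a + 1) ∑ δₙ ^ s`, which is bounded
independently of `r`, so `μH[s + 1] (A × [a, b]) < ∞`.
-/

open Metric Filter Topology ENNReal NNReal

section Cover

variable {X : Type*} [PseudoEMetricSpace X]

theorem ediam_prod_le {Y : Type*} [PseudoEMetricSpace Y] (s : Set X) (t : Set Y) :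
    ediam (s ×ˢ t) ≤ max (ediam s) (ediam t) :=
  ediam_le fun _ hx _ hy => max_le_max (edist_le_ediam_of_mem hx.1 hy.1)
    (edist_le_ediam_of_mem hx.2 hy.2)

theorem Icc_subset_biUnion_Icc_add_mul {a b δ : ℝ} (hδ : 0 < δ) :
    Icc a b ⊆ ⋃ k ≤ ⌊(b - a) / δ⌋₊, Icc (a + k * δ) (a + k * δ + δ) := by
  intro y ⟨hay, hyb⟩
  have hya : 0 ≤ (y - a) / δ := div_nonneg (sub_nonneg.2 hay) hδ.le
  refine mem_iUnion₂.2 ⟨⌊(y - a) / δ⌋₊, ?_, ?_, ?_⟩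
  · exact Nat.floor_le_floor (by gcongr)
  · linarith [(le_div_iff₀ hδ).1 (Nat.floor_le hya)]
  · linarith [(div_lt_iff₀ hδ).1 (Nat.lt_floor_add_one ((y - a) / δ))]

theorem exists_cover_prod_Icc_tsum_ediam_rpow_le {t : Set X} {δ : ℝ} (hδ₀ : 0 < δ)
    (hδ₁ : δ ≤ 1) (ht : ediam t ≤ ENNReal.ofReal δ) {a b : ℝ} (hab : a ≤ b) {s : ℝ} (hs : 0 ≤ s) :
    ∃ u : ℕ → Set (X × ℝ), t ×ˢ Icc a b ⊆ ⋃ k, u k ∧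
      (∀ k, ediam (u k) ≤ ENNReal.ofReal δ) ∧
      ∑' k, ediam (u k) ^ (s + 1) ≤ ENNReal.ofReal (b - a + 1) * ENNReal.ofReal δ ^ s := by
  set K := ⌊(b - a) / δ⌋₊
  let u : ℕ → Set (X × ℝ) := fun k => if k ≤ K then t ×ˢ Icc (a + k * δ) (a + k * δ + δ) else ∅
  have hu : ∀ k, ediam (u k) ≤ ENNReal.ofReal δ := by
    intro k
    by_cases hk : k ≤ K
    · rw [show u k = _ from if_pos hk]
      refine (ediam_prod_le _ _).trans (max_le ht ?_)
      rw [Real.ediam_Icc, add_sub_cancel_left]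
    · rw [show u k = ∅ from if_neg hk, ediam_empty]
      exact zero_le
  refine ⟨u, ?_, hu, ?_⟩
  · rintro ⟨x, y⟩ ⟨hx, hy⟩
    obtain ⟨k, hk, hyk⟩ := mem_iUnion₂.1 (Icc_subset_biUnion_Icc_add_mul hδ₀ hy)
    exact mem_iUnion.2 ⟨k, by rw [show u k = _ from if_pos hk]; exact ⟨hx, hyk⟩⟩
  have hs₁ : 0 < s + 1 := by linarith
  have hδ : ENNReal.ofReal δ ≠ 0 := by simpa using hδ₀
  calc ∑' k, ediam (u k) ^ (s + 1)
      = ∑ k ∈ Finset.range (K + 1), ediam (u k) ^ (s + 1) := by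
        refine tsum_eq_sum fun k hk => ?_
        rw [show u k = ∅ from if_neg (by simpa [Nat.lt_succ_iff] using hk), ediam_empty,
          ENNReal.zero_rpow_of_pos hs₁]
    _ ≤ (K + 1 : ℕ) * ENNReal.ofReal δ ^ (s + 1) := by
        simpa using Finset.sum_le_card_nsmul (Finset.range (K + 1)) _ _
          fun k _ => ENNReal.rpow_le_rpow (hu k) hs₁.le
    _ = ENNReal.ofReal ((K + 1) * δ) * ENNReal.ofReal δ ^ s := by
        rw [ENNReal.rpow_add _ _ hδ ENNReal.ofReal_ne_top, ENNReal.rpow_one,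
          ENNReal.ofReal_mul (by positivity)]
        norm_cast
        ring
    _ ≤ ENNReal.ofReal (b - a + 1) * ENNReal.ofReal δ ^ s := by
        gcongr
        have : K * δ ≤ b - a :=
          (le_div_iff₀ hδ₀).1 (Nat.floor_le (div_nonneg (sub_nonneg.2 hab) hδ₀.le))
        linarith

end Cover

section Hausdorff

variable {X : Type*} [EMetricSpace X] [MeasurableSpace X] [BorelSpace X]

theorem exists_cover_tsum_ediam_rpow_lt_of_hausdorffMeasure_eq_zero {d : ℝ} (hd : 0 < d)
    {s : Set X} (hs : μH[d] s = 0) {r ε : ℝ≥0∞} (hr : 0 < r) (hε : 0 < ε) :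
    ∃ t : ℕ → Set X, s ⊆ ⋃ n, t n ∧ (∀ n, ediam (t n) ≤ r) ∧ ∑' n, ediam (t n) ^ d < ε := by
  simp only [Measure.hausdorffMeasure_apply, ENNReal.iSup_eq_zero] at hs
  obtain ⟨t, hst, htr, htε⟩ : ∃ t : ℕ → Set X, s ⊆ ⋃ n, t n ∧ (∀ n, ediam (t n) ≤ r) ∧
      ∑' n, ⨆ _ : (t n).Nonempty, ediam (t n) ^ d < ε := by
    simpa only [iInf_lt_iff, exists_prop] using (hs r hr).trans_lt hε
  refine ⟨t, hst, htr, lt_of_le_of_lt (ENNReal.tsum_le_tsum fun n => ?_) htε⟩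
  rcases (t n).eq_empty_or_nonempty with hn | hn
  · simp [hn, ENNReal.zero_rpow_of_pos hd]
  · exact le_iSup_of_le hn le_rfl

theorem hausdorffMeasure_le_of_forall_exists_cover {ι : Type*} [Countable ι] {d : ℝ} {s : Set X}
    {C : ℝ≥0∞} (h : ∀ r : ℝ, 0 < r → ∃ t : ι → Set X, s ⊆ ⋃ i, t i ∧
      (∀ i, ediam (t i) ≤ ENNReal.ofReal r) ∧ ∑' i, ediam (t i) ^ d ≤ C) :
    μH[d] s ≤ C := by
  choose t hst htr htC using fun n : ℕ => h (n + 1 : ℝ)⁻¹ (by positivity)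
  have hr : Tendsto (fun n : ℕ => ENNReal.ofReal (n + 1 : ℝ)⁻¹) atTop (𝓝 0) := by
    simpa using (ENNReal.tendsto_ofReal tendsto_one_div_add_atTop_nhds_zero_nat)
  calc μH[d] s ≤ liminf (fun n => ∑' i, ediam (t n i) ^ d) atTop :=
        Measure.hausdorffMeasure_le_liminf_tsum d s _ hr t (.of_forall htr) (.of_forall hst)
    _ ≤ C := liminf_le_of_frequently_le' (.of_forall htC)

end Hausdorff

-- Cutting `[a, b]` into pieces of length `δ n` needs `δ n > 0`, whereas the sets of a cover may
-- have diameter `0`: pad the diameters by `ρ * 2⁻¹ ^ n`.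
theorem exists_pos_radii_tsum_rpow_le {e : ℕ → ℝ≥0∞} {ρ : ℝ} (hρ₀ : 0 < ρ) (hρ₁ : ρ ≤ 1)
    (he : ∀ n, e n ≤ ENNReal.ofReal ρ) {s : ℝ} (hs : 0 < s) :
    ∃ δ : ℕ → ℝ, (∀ n, 0 < δ n ∧ δ n ≤ ρ ∧ e n ≤ ENNReal.ofReal (δ n)) ∧
      ∑' n, ENNReal.ofReal (δ n) ^ s ≤ ∑' n, e n ^ s + (1 - 2⁻¹ ^ s)⁻¹ := by
  have htop : ∀ n, e n ≠ ∞ := fun n => ne_top_of_le_ne_top ofReal_ne_top (he n)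
  have hpad : ∀ n, ENNReal.ofReal (ρ * 2⁻¹ ^ n) ^ s ≤ (2⁻¹ ^ s) ^ n := fun n => calc
    ENNReal.ofReal (ρ * 2⁻¹ ^ n) ^ s ≤ ((2⁻¹ : ℝ≥0∞) ^ n) ^ s := by
      gcongr
      rw [← ENNReal.ofReal_toReal (a := 2⁻¹ ^ n) (by simp), ENNReal.toReal_pow,
        ENNReal.toReal_inv, ENNReal.toReal_ofNat]
      exact ENNReal.ofReal_le_ofReal (mul_le_of_le_one_left (by positivity) hρ₁)
    _ = (2⁻¹ ^ s) ^ n := by rw [← ENNReal.rpow_natCast_mul, mul_comm, ENNReal.rpow_mul_natCast]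
  refine ⟨fun n => max (e n).toReal (ρ * 2⁻¹ ^ n), fun n => ⟨?_, ?_, ?_⟩, ?_⟩
  · exact lt_max_of_lt_right (by positivity)
  · exact max_le (ENNReal.toReal_le_of_le_ofReal hρ₀.le (he n))
      (mul_le_of_le_one_right hρ₀.le (pow_le_one₀ (by norm_num) (by norm_num)))
  · rw [ENNReal.ofReal_max, ENNReal.ofReal_toReal (htop n)]
    exact le_max_left _ _
  calc ∑' n, ENNReal.ofReal (max (e n).toReal (ρ * 2⁻¹ ^ n)) ^ s
      ≤ ∑' n, (e n ^ s + (2⁻¹ ^ s) ^ n) := by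
        refine ENNReal.tsum_le_tsum fun n => ?_
        rw [ENNReal.ofReal_max, ENNReal.ofReal_toReal (htop n),
          (ENNReal.monotone_rpow_of_nonneg hs.le).map_max]
        exact max_le le_self_add ((hpad n).trans le_add_self)
    _ = ∑' n, e n ^ s + (1 - 2⁻¹ ^ s)⁻¹ := by rw [ENNReal.tsum_add, ENNReal.tsum_geometric]

section Product

variable {X : Type*} [EMetricSpace X] [MeasurableSpace X] [BorelSpace X]

theorem hausdorffMeasure_prod_Icc_ne_top {A : Set X} {s : ℝ} (hs : 0 < s) (hA : μH[s] A = 0)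
    {a b : ℝ} (hab : a ≤ b) : μH[s + 1] (A ×ˢ Icc a b) ≠ ∞ := by
  have hq : (1 - 2⁻¹ ^ s : ℝ≥0∞)⁻¹ ≠ ∞ :=
    inv_ne_top.2 (tsub_pos_of_lt (ENNReal.rpow_lt_one (by norm_num) hs)).ne'
  refine ne_top_of_le_ne_top (b := ENNReal.ofReal (b - a + 1) * (1 + (1 - 2⁻¹ ^ s)⁻¹))
    (mul_ne_top ofReal_ne_top (add_ne_top.2 ⟨one_ne_top, hq⟩))
    (hausdorffMeasure_le_of_forall_exists_cover (ι := ℕ × ℕ) fun r hr => ?_)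
  have hρ : 0 < min r 1 := lt_min hr one_pos
  obtain ⟨t, hAt, htρ, hts⟩ := exists_cover_tsum_ediam_rpow_lt_of_hausdorffMeasure_eq_zero hs hA
    (ENNReal.ofReal_pos.2 hρ) one_pos
  obtain ⟨δ, hδ, hδs⟩ := exists_pos_radii_tsum_rpow_le hρ (min_le_right r 1) htρ hs
  choose u hu hur hus using fun n =>
    exists_cover_prod_Icc_tsum_ediam_rpow_le (hδ n).1 ((hδ n).2.1.trans (min_le_right _ _))
      (hδ n).2.2 hab hs.le
  refine ⟨fun p => u p.1 p.2, ?_, fun p => ?_, ?_⟩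
  · rintro x ⟨hx₁, hx₂⟩
    obtain ⟨n, hn⟩ := mem_iUnion.1 (hAt hx₁)
    obtain ⟨k, hk⟩ := mem_iUnion.1 (hu n ⟨hn, hx₂⟩)
    exact mem_iUnion.2 ⟨(n, k), hk⟩
  · exact (hur p.1 p.2).trans (ENNReal.ofReal_le_ofReal ((hδ p.1).2.1.trans (min_le_left _ _)))
  calc ∑' p : ℕ × ℕ, ediam (u p.1 p.2) ^ (s + 1)
      = ∑' n, ∑' k, ediam (u n k) ^ (s + 1) :=
        ENNReal.tsum_prod (f := fun n k => ediam (u n k) ^ (s + 1))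
    _ ≤ ∑' n, ENNReal.ofReal (b - a + 1) * ENNReal.ofReal (δ n) ^ s := ENNReal.tsum_le_tsum hus
    _ = ENNReal.ofReal (b - a + 1) * ∑' n, ENNReal.ofReal (δ n) ^ s := ENNReal.tsum_mul_left
    _ ≤ ENNReal.ofReal (b - a + 1) * (1 + (1 - 2⁻¹ ^ s)⁻¹) := by
        gcongr
        exact hδs.trans (add_le_add hts.le le_rfl)

end Product

section Dimension

variable {X : Type*} [EMetricSpace X]

theorem dimH_prod_Icc_le {A : Set X} {s : ℝ≥0} (hs : dimH A < s) (a b : ℝ) :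
    dimH (A ×ˢ Icc a b) ≤ s + 1 := by
  borelize X
  rcases lt_or_ge b a with hba | hab
  · simp [Icc_eq_empty_of_lt hba]
  have hs₀ : 0 < (s : ℝ) := NNReal.coe_pos.2 (ENNReal.coe_pos.1 (pos_of_gt hs))
  have h := hausdorffMeasure_prod_Icc_ne_top hs₀ (hausdorffMeasure_of_dimH_lt hs) hab
  exact_mod_cast dimH_le_of_hausdorffMeasure_ne_top (d := s + 1) (by exact_mod_cast h)

theorem dimH_prod_univ_le (A : Set X) : dimH (A ×ˢ (univ : Set ℝ)) ≤ dimH A + 1 := by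
  rw [← iUnion_Icc_intCast ℝ, prod_iUnion, dimH_iUnion]
  refine iSup_le fun z => ENNReal.le_of_forall_pos_le_add fun ε hε hA => ?_
  lift dimH A to ℝ≥0 using (add_ne_top.1 hA.ne).1 with d hd
  calc dimH (A ×ˢ Icc (z : ℝ) (z + 1)) ≤ ((d + ε : ℝ≥0) : ℝ≥0∞) + 1 :=
        dimH_prod_Icc_le (by rw [← hd]; exact_mod_cast lt_add_of_pos_right d hε) _ _
    _ = d + 1 + ε := by push_cast; ring

end Dimension

theorem biUnion_lineAB_eq_image (Y : Set (ℝ × ℝ)) :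
    ⋃ p ∈ Y, lineAB p.1 p.2 =
      (fun q : (ℝ × ℝ) × ℝ => (q.2, q.1.1 * q.2 + q.1.2)) '' (Y ×ˢ univ) := by
  ext ⟨x, y⟩
  simp [lineAB, eq_comm]

theorem stmt_2 (Y : Set (ℝ × ℝ)) (hY : dimH Y = 0) :
    dimH (⋃ p ∈ Y, lineAB p.1 p.2) ≤ 1 := by
  have hF : ContDiff ℝ 1 fun q : (ℝ × ℝ) × ℝ => (q.2, q.1.1 * q.2 + q.1.2) := by fun_prop
  calc dimH (⋃ p ∈ Y, lineAB p.1 p.2) ≤ dimH (Y ×ˢ (univ : Set ℝ)) := by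
        rw [biUnion_lineAB_eq_image]
        exact hF.contDiffOn.dimH_image_le convex_univ (subset_univ _)
    _ ≤ dimH Y + 1 := dimH_prod_univ_le Y
    _ = 1 := by rw [hY, zero_add]
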